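/- arXiv:2112.01287 — 2 statements merged into one kernel-verified Lean document; each statement's English description precedes it below -/
import Mathlib

section
/- Let σ > 0, K > 0 and r ∈ ℝ, and let u(τ,x) = x·N(d₁(τ,x)) − K·e^{−rτ}·N(d₂(τ,x)) be the Black–Scholes call price. Then for every x > 0, u(τ,x) tends to max(x − K, 0) as τ → 0⁺. -/
/-- The standard normal cumulative distribution function. -/
noncomputable def stdNormalCdf (d : ℝ) : ℝ :=
  (Real.sqrt (2 * Real.pi))⁻¹ * ∫ y in Set.Iic d, Real.exp (-(y ^ 2) / 2)

noncomputable def d₁ (σ K r τ x : ℝ) : ℝ :=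
  (Real.log (x / K) + (r + σ ^ 2 / 2) * τ) / (σ * Real.sqrt τ)

noncomputable def d₂ (σ K r τ x : ℝ) : ℝ :=
  d₁ σ K r τ x - σ * Real.sqrt τ

/-- The Black–Scholes price of a European call option. -/
noncomputable def bsCall (σ K r τ x : ℝ) : ℝ :=
  x * stdNormalCdf (d₁ σ K r τ x) - K * Real.exp (-r * τ) * stdNormalCdf (d₂ σ K r τ x)

/-!
Write the price as `(x - K e^{-rτ}) N(d₁) + K e^{-rτ} (N(d₁) - N(d₂))`. The second term vanishes
because `N` is `(2π)^{-1/2}`-Lipschitz and `d₁ - d₂ = σ√τ → 0`. In the first, `d₁ → ±∞` according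
to the sign of `log (x / K)`, so `N(d₁) → 1` or `0`; at `x = K` the bounded factor `N(d₁)` is
multiplied by `x - K e^{-rτ} → 0`.
-/

open MeasureTheory ProbabilityTheory Filter Set Real Topology

lemma stdNormalCdf_eq_cdf_gaussianReal : stdNormalCdf = cdf (gaussianReal 0 1) := by
  ext d
  rw [cdf_eq_real, measureReal_def, gaussianReal_apply_eq_integral _ one_ne_zero,
    ENNReal.toReal_ofReal (setIntegral_nonneg measurableSet_Iic
      fun y _ => gaussianPDFReal_nonneg 0 1 y),
    stdNormalCdf]
  simp [gaussianPDFReal, integral_const_mul]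

lemma abs_stdNormalCdf_le_one (d : ℝ) : |stdNormalCdf d| ≤ 1 := by
  rw [stdNormalCdf_eq_cdf_gaussianReal, abs_le]
  exact ⟨by linarith [cdf_nonneg (gaussianReal 0 1) d], cdf_le_one _ d⟩

lemma tendsto_stdNormalCdf_atTop : Tendsto stdNormalCdf atTop (𝓝 1) := by
  simpa only [stdNormalCdf_eq_cdf_gaussianReal] using tendsto_cdf_atTop _

lemma tendsto_stdNormalCdf_atBot : Tendsto stdNormalCdf atBot (𝓝 0) := by
  simpa only [stdNormalCdf_eq_cdf_gaussianReal] using tendsto_cdf_atBot _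

lemma integrable_exp_neg_sq_div_two : Integrable fun y : ℝ => exp (-(y ^ 2) / 2) := by
  simpa [div_eq_inv_mul] using integrable_exp_neg_mul_sq (inv_pos.2 (two_pos : (0 : ℝ) < 2))

lemma abs_stdNormalCdf_sub_le (a b : ℝ) :
    |stdNormalCdf b - stdNormalCdf a| ≤ (√(2 * π))⁻¹ * |b - a| := by
  rw [stdNormalCdf, stdNormalCdf, ← mul_sub, intervalIntegral.integral_Iic_sub_Iic
    integrable_exp_neg_sq_div_two.integrableOn integrable_exp_neg_sq_div_two.integrableOn,
    abs_mul, abs_of_pos (by positivity)]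
  refine mul_le_mul_of_nonneg_left ?_ (by positivity)
  rw [← norm_eq_abs, ← one_mul |b - a|]
  refine intervalIntegral.norm_integral_le_of_norm_le_const fun y _ => ?_
  rw [norm_of_nonneg (exp_pos _).le, exp_le_one_iff]
  nlinarith [sq_nonneg y]

lemma Filter.Tendsto.mul_tendsto_max_zero {ι : Type*} {l : Filter ι} {g f : ι → ℝ} {a : ℝ}
    (hg : Tendsto g l (𝓝 a)) (hf : ∀ t, |f t| ≤ 1)
    (hpos : 0 < a → Tendsto f l (𝓝 1)) (hneg : a < 0 → Tendsto f l (𝓝 0)) :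
    Tendsto (fun t => g t * f t) l (𝓝 (max a 0)) := by
  rcases lt_trichotomy a 0 with ha | rfl | ha
  · simpa [max_eq_right ha.le] using hg.mul (hneg ha)
  · simpa using hg.zero_mul_isBoundedUnder_le ⟨1, eventually_map.2 (Eventually.of_forall hf)⟩
  · simpa [max_eq_left ha.le] using hg.mul (hpos ha)

lemma tendsto_sqrt_nhdsGT_zero : Tendsto (fun τ => √τ) (𝓝[>] 0) (𝓝 0) := by
  simpa using (continuous_sqrt.tendsto 0).mono_left nhdsWithin_le_nhds

lemma tendsto_inv_mul_sqrt_nhdsGT_zero {σ : ℝ} (hσ : 0 < σ) :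
    Tendsto (fun τ => (σ * √τ)⁻¹) (𝓝[>] 0) atTop := by
  refine Tendsto.inv_tendsto_nhdsGT_zero (tendsto_nhdsWithin_iff.2 ⟨?_, ?_⟩)
  · simpa using tendsto_sqrt_nhdsGT_zero.const_mul σ
  · filter_upwards [self_mem_nhdsWithin] with τ hτ using mul_pos hσ (sqrt_pos.2 hτ)

lemma d₁_eq {σ K r τ x : ℝ} (hσ : σ ≠ 0) (hτ : 0 < τ) :
    d₁ σ K r τ x = log (x / K) * (σ * √τ)⁻¹ + (r + σ ^ 2 / 2) / σ * √τ := by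
  have hsq : √τ * √τ = τ := mul_self_sqrt hτ.le
  have hs : √τ ≠ 0 := (sqrt_pos.2 hτ).ne'
  rw [d₁]
  field_simp
  linear_combination (-(2 * r + σ ^ 2)) * hsq

lemma tendsto_d₁_atTop {σ K r x : ℝ} (hσ : 0 < σ) (hK : 0 < K) (hxK : K < x) :
    Tendsto (fun τ => d₁ σ K r τ x) (𝓝[>] 0) atTop := by
  have hlog : 0 < log (x / K) := log_pos ((one_lt_div hK).2 hxK)
  refine (((tendsto_inv_mul_sqrt_nhdsGT_zero hσ).const_mul_atTop hlog).atTop_add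
    (tendsto_sqrt_nhdsGT_zero.const_mul ((r + σ ^ 2 / 2) / σ))).congr' ?_
  filter_upwards [self_mem_nhdsWithin] with τ hτ using (d₁_eq hσ.ne' hτ).symm

lemma tendsto_d₁_atBot {σ K r x : ℝ} (hσ : 0 < σ) (hK : 0 < K) (hx : 0 < x) (hxK : x < K) :
    Tendsto (fun τ => d₁ σ K r τ x) (𝓝[>] 0) atBot := by
  have hlog : log (x / K) < 0 := log_neg (div_pos hx hK) ((div_lt_one hK).2 hxK)
  refine (((tendsto_inv_mul_sqrt_nhdsGT_zero hσ).const_mul_atTop_of_neg hlog).atBot_add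
    (tendsto_sqrt_nhdsGT_zero.const_mul ((r + σ ^ 2 / 2) / σ))).congr' ?_
  filter_upwards [self_mem_nhdsWithin] with τ hτ using (d₁_eq hσ.ne' hτ).symm

lemma tendsto_stdNormalCdf_d₁_sub_d₂ (σ K r x : ℝ) :
    Tendsto (fun τ => stdNormalCdf (d₁ σ K r τ x) - stdNormalCdf (d₂ σ K r τ x))
      (𝓝[>] 0) (𝓝 0) := by
  have hvol : Tendsto (fun τ => (√(2 * π))⁻¹ * |σ * √τ|) (𝓝[>] 0) (𝓝 0) := by
    simpa using ((tendsto_sqrt_nhdsGT_zero.const_mul σ).abs).const_mul (√(2 * π))⁻¹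
  refine squeeze_zero_norm (fun τ => ?_) hvol
  rw [norm_eq_abs]
  simpa [d₂] using abs_stdNormalCdf_sub_le (d₂ σ K r τ x) (d₁ σ K r τ x)

/-- As time to maturity tends to zero from the right, the Black-Scholes call price tends
to the payoff `max (x - K) 0`. -/
theorem bsCall_tendsto_payoff (σ K r : ℝ) (hσ : 0 < σ) (hK : 0 < K)
    (x : ℝ) (hx : 0 < x) :
    Filter.Tendsto (fun τ : ℝ => bsCall σ K r τ x)
      (nhdsWithin 0 (Set.Ioi 0)) (nhds (max (x - K) 0)) := by
  have hdisc : Tendsto (fun τ => exp (-r * τ)) (𝓝[>] 0) (𝓝 1) := by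
    have hcont : Continuous fun τ : ℝ => exp (-r * τ) := by fun_prop
    simpa using (hcont.tendsto 0).mono_left nhdsWithin_le_nhds
  have hmain := (tendsto_const_nhds.sub (hdisc.const_mul K)).mul_tendsto_max_zero
    (f := fun τ => stdNormalCdf (d₁ σ K r τ x)) (fun τ => abs_stdNormalCdf_le_one _)
    (fun hxK => tendsto_stdNormalCdf_atTop.comp (tendsto_d₁_atTop hσ hK (by linarith)))
    (fun hxK => tendsto_stdNormalCdf_atBot.comp (tendsto_d₁_atBot hσ hK hx (by linarith)))
  have hgap := (hdisc.const_mul K).mul (tendsto_stdNormalCdf_d₁_sub_d₂ σ K r x)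
  convert hmain.add hgap using 1
  · ext τ
    simp only [bsCall]
    ring
  · simp
end

section
/- Let σ > 0, K > 0, C > 0 and r ∈ ℝ, and let u(τ,x) = C·e^{−rτ}·N(d₂(τ,x)) be the Black–Scholes cash-or-nothing price. Then for every x > 0 with x ≠ K, u(τ,x) tends, as τ → 0⁺, to C if x > K and to 0 if x < K. -/
/-- The Black-Scholes price of a cash-or-nothing option paying `C` when the underlying
exceeds `K` at maturity. -/
noncomputable def bsCash (σ K C r τ x : ℝ) : ℝ :=
  C * Real.exp (-r * τ) * stdNormalCdf (d₂ σ K r τ x)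

open Filter MeasureTheory Set Real in
lemma integrable_gauss_aux : Integrable (fun y : ℝ => Real.exp (-(y ^ 2) / 2)) := by
  have h := integrable_exp_neg_mul_sq (b := (1/2 : ℝ)) (by norm_num)
  convert h using 2 with y
  ring_nf

open Filter MeasureTheory Set Real in
lemma integral_gauss_aux : (∫ y : ℝ, Real.exp (-(y ^ 2) / 2)) = Real.sqrt (2 * Real.pi) := by
  have h := integral_gaussian (1/2 : ℝ)
  rw [show Real.pi / (1/2) = 2 * Real.pi by ring] at h
  rw [← h]
  congr 1 with y
  ring_nf

open Filter MeasureTheory Set Real in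
lemma stdNormalCdf_tendsto_one : Tendsto stdNormalCdf atTop (nhds 1) := by
  have h := tendsto_setIntegral_of_monotone (μ := volume)
    (f := fun y : ℝ => Real.exp (-(y ^ 2) / 2)) (s := fun d : ℝ => Set.Iic d)
    (fun _ => measurableSet_Iic) (fun a b hab => Iic_subset_Iic.2 hab)
    (by rw [iUnion_Iic]; exact integrable_gauss_aux.integrableOn)
  rw [iUnion_Iic, setIntegral_univ, integral_gauss_aux] at h
  have hpos : (0 : ℝ) < Real.sqrt (2 * Real.pi) :=
    Real.sqrt_pos.2 (by positivity)
  have := h.const_mul ((Real.sqrt (2 * Real.pi))⁻¹)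
  rw [inv_mul_cancel₀ hpos.ne'] at this
  exact this

open Filter MeasureTheory Set Real in
lemma stdNormalCdf_tendsto_zero : Tendsto stdNormalCdf atBot (nhds 0) := by
  have h := tendsto_setIntegral_of_antitone (μ := volume)
    (f := fun y : ℝ => Real.exp (-(y ^ 2) / 2)) (s := fun d : ℝ => Set.Iic (-d))
    (fun _ => measurableSet_Iic)
    (fun a b hab => Iic_subset_Iic.2 (neg_le_neg hab))
    ⟨0, integrable_gauss_aux.integrableOn⟩
  have hempty : (⋂ n : ℝ, Set.Iic (-n)) = (∅ : Set ℝ) := by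
    ext y
    simp only [mem_iInter, mem_Iic, mem_empty_iff_false, iff_false, not_forall, not_le]
    exact ⟨-(y - 1), by linarith⟩
  rw [hempty, setIntegral_empty] at h
  have h2 : Tendsto (fun d : ℝ => stdNormalCdf (-d)) atTop (nhds 0) := by
    have := h.const_mul ((Real.sqrt (2 * Real.pi))⁻¹)
    simpa [stdNormalCdf] using this
  have h3 := h2.comp tendsto_neg_atBot_atTop
  refine h3.congr fun d => ?_
  simp [Function.comp]

open Filter MeasureTheory Set Real in
lemma sqrt_tendsto_zero_within : Tendsto Real.sqrt (nhdsWithin 0 (Set.Ioi 0))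
    (nhdsWithin 0 (Set.Ioi 0)) := by
  rw [tendsto_nhdsWithin_iff]
  constructor
  · have := Real.continuous_sqrt.tendsto 0
    rw [Real.sqrt_zero] at this
    exact this.mono_left nhdsWithin_le_nhds
  · filter_upwards [self_mem_nhdsWithin] with τ hτ
    exact Real.sqrt_pos.2 hτ

open Filter MeasureTheory Set Real in
lemma d₂_tendsto (σ K r x : ℝ) (hσ : 0 < σ) (hK : 0 < K) (hx : 0 < x) :
    (K < x → Tendsto (fun τ : ℝ => d₂ σ K r τ x) (nhdsWithin 0 (Set.Ioi 0)) atTop) ∧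
    (x < K → Tendsto (fun τ : ℝ => d₂ σ K r τ x) (nhdsWithin 0 (Set.Ioi 0)) atBot) := by
  have hsq := sqrt_tendsto_zero_within
  have hsq0 : Tendsto (fun τ : ℝ => Real.sqrt τ) (nhdsWithin 0 (Set.Ioi 0)) (nhds 0) :=
    hsq.mono_right nhdsWithin_le_nhds
  -- denominator inverse tends to atTop
  have hden : Tendsto (fun τ : ℝ => (σ * Real.sqrt τ)⁻¹) (nhdsWithin 0 (Set.Ioi 0)) atTop := by
    apply Filter.Tendsto.inv_tendsto_nhdsGT_zero
    rw [tendsto_nhdsWithin_iff]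
    constructor
    · simpa using (tendsto_const_nhds.mul hsq0)
    · filter_upwards [self_mem_nhdsWithin] with τ hτ
      exact mul_pos hσ (Real.sqrt_pos.2 hτ)
  -- numerator tends to log (x/K)
  have hnum : Tendsto (fun τ : ℝ => Real.log (x / K) + (r + σ ^ 2 / 2) * τ)
      (nhdsWithin 0 (Set.Ioi 0)) (nhds (Real.log (x / K))) := by
    have : Tendsto (fun τ : ℝ => (r + σ ^ 2 / 2) * τ) (nhdsWithin 0 (Set.Ioi 0)) (nhds 0) := by
      have : Tendsto (fun τ : ℝ => (r + σ ^ 2 / 2) * τ) (nhds 0) (nhds ((r + σ ^ 2 / 2) * 0)) :=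
        (continuous_const.mul continuous_id).tendsto 0
      rw [mul_zero] at this
      exact this.mono_left nhdsWithin_le_nhds
    simpa using tendsto_const_nhds.add this
  have hsub : Tendsto (fun τ : ℝ => -(σ * Real.sqrt τ)) (nhdsWithin 0 (Set.Ioi 0)) (nhds 0) := by
    simpa using ((tendsto_const_nhds.mul hsq0) : Tendsto (fun τ : ℝ => σ * Real.sqrt τ) _ _).neg
  have hd2eq : ∀ τ : ℝ, d₂ σ K r τ x =
      (Real.log (x / K) + (r + σ ^ 2 / 2) * τ) * (σ * Real.sqrt τ)⁻¹ + -(σ * Real.sqrt τ) := by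
    intro τ
    simp [d₂, d₁, div_eq_mul_inv, sub_eq_add_neg]
  constructor
  · intro hKx
    have hL : 0 < Real.log (x / K) :=
      Real.log_pos ((one_lt_div hK).2 hKx)
    have hmul := Filter.Tendsto.pos_mul_atTop hL hnum hden
    have := hmul.atTop_add hsub
    exact this.congr (fun τ => (hd2eq τ).symm)
  · intro hxK
    have hL : Real.log (x / K) < 0 :=
      Real.log_neg (div_pos hx hK) ((div_lt_one hK).2 hxK)
    have hmul := Filter.Tendsto.neg_mul_atTop hL hnum hden
    have := hmul.atBot_add hsub
    exact this.congr (fun τ => (hd2eq τ).symm)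

/-- As time to maturity tends to zero from the right, the Black-Scholes cash-or-nothing
price tends to `C` if `x > K` and to `0` if `x < K`. -/
theorem bsCash_tendsto_payoff (σ K C r : ℝ) (hσ : 0 < σ) (hK : 0 < K) (hC : 0 < C)
    (x : ℝ) (hx : 0 < x) (hxK : x ≠ K) :
    (K < x → Filter.Tendsto (fun τ : ℝ => bsCash σ K C r τ x)
      (nhdsWithin 0 (Set.Ioi 0)) (nhds C)) ∧
    (x < K → Filter.Tendsto (fun τ : ℝ => bsCash σ K C r τ x)
      (nhdsWithin 0 (Set.Ioi 0)) (nhds 0)) := by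
  have hexp : Filter.Tendsto (fun τ : ℝ => C * Real.exp (-r * τ))
      (nhdsWithin 0 (Set.Ioi 0)) (nhds C) := by
    have h1 : Filter.Tendsto (fun τ : ℝ => Real.exp (-r * τ)) (nhds (0:ℝ)) (nhds 1) := by
      have : Continuous (fun τ : ℝ => Real.exp (-r * τ)) := by continuity
      have := this.tendsto 0
      simpa using this
    have h2 : Filter.Tendsto (fun τ : ℝ => Real.exp (-r * τ)) (nhdsWithin 0 (Set.Ioi 0))
        (nhds 1) := h1.mono_left nhdsWithin_le_nhds
    simpa using (tendsto_const_nhds (x := C)).mul h2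
  obtain ⟨hup, hdown⟩ := d₂_tendsto σ K r x hσ hK hx
  constructor
  · intro hKx
    have hcdf := stdNormalCdf_tendsto_one.comp (hup hKx)
    have := hexp.mul hcdf
    simpa [bsCash, mul_assoc, Function.comp] using this
  · intro hxK'
    have hcdf := stdNormalCdf_tendsto_zero.comp (hdown hxK')
    have := hexp.mul hcdf
    simpa [bsCash, mul_assoc, Function.comp] using this
end
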